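/- Let m ≥ 1 and consider the directional CSS construction of W = NE²NE²N with the row-alternating layout on the torus (ℤ/12m) × (ℤ/6m). Let χ_{02} ∈ F₂^{Λ_X} be the indicator of the X-ancillas whose y-coordinate reduces to 0 or 2 under the natural map ℤ/6m → ℤ/6, and χ_{04} the indicator of those whose y-coordinate reduces to 0 or 4. Then χ_{02}·H_X = 0 and χ_{04}·H_X = 0, and χ_{02}, χ_{04} are linearly independent over F₂, so dim_{F₂} ker(H_Xᵀ) ≥ 2; the analogous two indicators on Λ_Z give dim_{F₂} ker(H_Zᵀ) ≥ 2. Consequently rank(H_X) ≤ |Λ_X| − 2, rank(H_Z) ≤ |Λ_Z| − 2, and k ≥ 4 for every m ≥ 1. -/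

import Mathlib

/-- The torus `G = (ℤ/L_x) × (ℤ/L_y)`. -/
abbrev Torus (Lx Ly : ℕ) := ZMod Lx × ZMod Ly

/-- The parity map `π : G → ℤ/2`, `π(x, y) = x + y mod 2` (well defined since
`2 ∣ L_x` and `2 ∣ L_y`). -/
def torusParity {Lx Ly : ℕ} (hx : 2 ∣ Lx) (hy : 2 ∣ Ly) (p : Torus Lx Ly) : ZMod 2 :=
  ZMod.castHom hx (ZMod 2) p.1 + ZMod.castHom hy (ZMod 2) p.2

/-- Data sites `Λ_Q = π⁻¹(0)`. -/
abbrev DataSite (Lx Ly : ℕ) (hx : 2 ∣ Lx) (hy : 2 ∣ Ly) :=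
  {p : Torus Lx Ly // torusParity hx hy p = 0}

/-- X-ancillas under row alternation: `π(p) = 1` and `y ≡ 0 (mod 2)`. -/
abbrev XAncilla (Lx Ly : ℕ) (hx : 2 ∣ Lx) (hy : 2 ∣ Ly) :=
  {p : Torus Lx Ly // torusParity hx hy p = 1 ∧ ZMod.castHom hy (ZMod 2) p.2 = 0}

/-- Z-ancillas under row alternation: `π(p) = 1` and `y ≡ 1 (mod 2)`. -/
abbrev ZAncilla (Lx Ly : ℕ) (hx : 2 ∣ Lx) (hy : 2 ∣ Ly) :=
  {p : Torus Lx Ly // torusParity hx hy p = 1 ∧ ZMod.castHom hy (ZMod 2) p.2 = 1}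

/-- The offset list of the word `W = NE²NE²N`. -/
def offsets : List (ℤ × ℤ) := [(0, 1), (1, 2), (3, 2), (4, 3), (5, 4), (7, 4), (8, 5)]

/-- Reduction of an integer offset into the torus. -/
def toTorus (Lx Ly : ℕ) (q : ℤ × ℤ) : Torus Lx Ly := ((q.1 : ZMod Lx), (q.2 : ZMod Ly))

/-- The X-check matrix `H_X ∈ F₂^{Λ_X × Λ_Q}`:
`H_X(a, q) = #{j : q = a + Q_j} mod 2`. -/
def HX (Lx Ly : ℕ) (hx : 2 ∣ Lx) (hy : 2 ∣ Ly) :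
    Matrix (XAncilla Lx Ly hx hy) (DataSite Lx Ly hx hy) (ZMod 2) :=
  fun a q =>
    ((offsets.countP fun Qj => decide ((q : Torus Lx Ly) = a + toTorus Lx Ly Qj)) : ℕ)

/-- The Z-check matrix `H_Z ∈ F₂^{Λ_Z × Λ_Q}`:
`H_Z(a, q) = #{j : q = a + Q_j} mod 2`. -/
def HZ (Lx Ly : ℕ) (hx : 2 ∣ Lx) (hy : 2 ∣ Ly) :
    Matrix (ZAncilla Lx Ly hx hy) (DataSite Lx Ly hx hy) (ZMod 2) :=
  fun a q =>
    ((offsets.countP fun Qj => decide ((q : Torus Lx Ly) = a + toTorus Lx Ly Qj)) : ℕ)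

/-- The logical dimension `k = n − rank(H_X) − rank(H_Z)` with `n = |Λ_Q|`. -/
noncomputable def kDim (Lx Ly : ℕ) [NeZero Lx] [NeZero Ly]
    (hx : 2 ∣ Lx) (hy : 2 ∣ Ly) : ℕ :=
  Fintype.card (DataSite Lx Ly hx hy) - (HX Lx Ly hx hy).rank - (HZ Lx Ly hx hy).rank

/-- The indicator `χ_{02}` on X-ancillas of the torus `(ℤ/12m) × (ℤ/6m)`: the value
is `1` exactly when the `y`-coordinate reduces to `0` or `2` under `ℤ/6m → ℤ/6`. -/
def chi02 (m : ℕ) (hx : 2 ∣ 12 * m) (hy : 2 ∣ 6 * m) :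
    XAncilla (12 * m) (6 * m) hx hy → ZMod 2 :=
  fun a =>
    if ZMod.castHom (dvd_mul_right 6 m) (ZMod 6) a.1.2 = 0 ∨
        ZMod.castHom (dvd_mul_right 6 m) (ZMod 6) a.1.2 = 2 then 1 else 0

/-- The indicator `χ_{04}` on X-ancillas of the torus `(ℤ/12m) × (ℤ/6m)`: the value
is `1` exactly when the `y`-coordinate reduces to `0` or `4` under `ℤ/6m → ℤ/6`. -/
def chi04 (m : ℕ) (hx : 2 ∣ 12 * m) (hy : 2 ∣ 6 * m) :
    XAncilla (12 * m) (6 * m) hx hy → ZMod 2 :=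
  fun a =>
    if ZMod.castHom (dvd_mul_right 6 m) (ZMod 6) a.1.2 = 0 ∨
        ZMod.castHom (dvd_mul_right 6 m) (ZMod 6) a.1.2 = 4 then 1 else 0

/-! ### Auxiliary machinery -/

section Aux

/-- ancillas of given row parity `c`. -/
abbrev Anc (m : ℕ) (hx : 2 ∣ 12 * m) (hy : 2 ∣ 6 * m) (c : ZMod 2) :=
  {p : Torus (12 * m) (6 * m) //
    torusParity hx hy p = 1 ∧ ZMod.castHom hy (ZMod 2) p.2 = c}

/-- generic check matrix. -/
def HGen (m : ℕ) (hx : 2 ∣ 12 * m) (hy : 2 ∣ 6 * m) (c : ZMod 2) :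
    Matrix (Anc m hx hy c) (DataSite (12 * m) (6 * m) hx hy) (ZMod 2) :=
  fun a q =>
    ((offsets.countP fun Qj =>
      decide ((q : Torus (12 * m) (6 * m)) = a + toTorus (12 * m) (6 * m) Qj)) : ℕ)

/-- generic indicator. -/
def chiGen (m : ℕ) (hx : 2 ∣ 12 * m) (hy : 2 ∣ 6 * m) (c : ZMod 2)
    (pS : ZMod 6 → Prop) [DecidablePred pS] : Anc m hx hy c → ZMod 2 :=
  fun a => if pS (ZMod.castHom (dvd_mul_right 6 m) (ZMod 6) a.1.2) then 1 else 0

/-- the generic per-offset contribution. -/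
def term (pS : ZMod 6 → Prop) [DecidablePred pS] (c : ZMod 2) (u : ZMod 6)
    (t : ℤ × ℤ) : ZMod 2 :=
  if ZMod.castHom (by norm_num : (2:ℕ) ∣ 6) (ZMod 2) u - ((t.2 : ZMod 2)) = c then
    (if pS (u - (t.2 : ZMod 6)) then 1 else 0) else 0

lemma cast_countP {α : Type*} (p : α → Bool) (l : List α) :
    ((l.countP p : ℕ) : ZMod 2) =
      (l.map (fun x => if p x then (1 : ZMod 2) else 0)).sum := by
  induction l with
  | nil => simp
  | cons a l ih =>
      rw [List.countP_cons, List.map_cons, List.sum_cons, Nat.cast_add, ih]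
      by_cases h : p a <;> simp [h] <;> ring

lemma sum_list_swap {ι α M : Type*} [Fintype ι] [AddCommMonoid M]
    (l : List α) (g : ι → α → M) :
    ∑ i, (l.map (g i)).sum = (l.map (fun t => ∑ i, g i t)).sum := by
  induction l with
  | nil => simp
  | cons a l ih => simp [Finset.sum_add_distrib, ih]

variable {m : ℕ} [NeZero m] [NeZero (12 * m)] [NeZero (6 * m)]
  (hx : 2 ∣ 12 * m) (hy : 2 ∣ 6 * m)

lemma castHom_y_eq (y : ZMod (6 * m)) :
    ZMod.castHom hy (ZMod 2) y =
      ZMod.castHom (by norm_num : (2:ℕ) ∣ 6) (ZMod 2)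
        (ZMod.castHom (dvd_mul_right 6 m) (ZMod 6) y) := by
  rw [← RingHom.comp_apply, ZMod.castHom_comp]

lemma inner_sum_eq (c : ZMod 2) (pS : ZMod 6 → Prop) [DecidablePred pS]
    (q : Torus (12 * m) (6 * m)) (hq : torusParity hx hy q = 0)
    (t : ℤ × ℤ) (ht : ((t.1 + t.2 : ℤ) : ZMod 2) = 1) :
    (∑ a : Anc m hx hy c, chiGen m hx hy c pS a *
        (if q = (a : Torus (12 * m) (6 * m)) + toTorus (12 * m) (6 * m) t
          then (1 : ZMod 2) else 0))
      = term pS c (ZMod.castHom (dvd_mul_right 6 m) (ZMod 6) q.2) t := by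
  set p0 : Torus (12 * m) (6 * m) := q - toTorus (12 * m) (6 * m) t with hp0
  have hb_eq : ∀ b : Anc m hx hy c,
      q = (b : Torus (12 * m) (6 * m)) + toTorus (12 * m) (6 * m) t →
      (b : Torus (12 * m) (6 * m)) = p0 := by
    intro b hcon
    rw [hp0, hcon, add_sub_cancel_right]
  have hpar : torusParity hx hy p0 = 1 := by
    have h1 : torusParity hx hy p0 =
        torusParity hx hy q - ((t.1 + t.2 : ℤ) : ZMod 2) := by
      simp only [hp0, torusParity, toTorus, Prod.fst_sub, Prod.snd_sub, map_sub,
        map_intCast, Int.cast_add]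
      ring
    rw [h1, hq, ht]
    decide
  have hy2 : ZMod.castHom hy (ZMod 2) p0.2 =
      ZMod.castHom (by norm_num : (2:ℕ) ∣ 6) (ZMod 2)
        (ZMod.castHom (dvd_mul_right 6 m) (ZMod 6) q.2) - (t.2 : ZMod 2) := by
    have : p0.2 = q.2 - ((t.2 : ℤ) : ZMod (6 * m)) := rfl
    rw [this, map_sub, map_intCast, castHom_y_eq hy]
  have hchi : ZMod.castHom (dvd_mul_right 6 m) (ZMod 6) p0.2
      = ZMod.castHom (dvd_mul_right 6 m) (ZMod 6) q.2 - (t.2 : ZMod 6) := by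
    have : p0.2 = q.2 - ((t.2 : ℤ) : ZMod (6 * m)) := rfl
    rw [this, map_sub, map_intCast]
  unfold term
  by_cases hc : ZMod.castHom (by norm_num : (2:ℕ) ∣ 6) (ZMod 2)
      (ZMod.castHom (dvd_mul_right 6 m) (ZMod 6) q.2) - (t.2 : ZMod 2) = c
  · rw [if_pos hc]
    have hmem : torusParity hx hy p0 = 1 ∧ ZMod.castHom hy (ZMod 2) p0.2 = c :=
      ⟨hpar, by rw [hy2, hc]⟩
    rw [Finset.sum_eq_single (⟨p0, hmem⟩ : Anc m hx hy c)]
    · have hq' : q = p0 + toTorus (12 * m) (6 * m) t := by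
        rw [hp0, sub_add_cancel]
      rw [if_pos hq', mul_one]
      show (if pS (ZMod.castHom (dvd_mul_right 6 m) (ZMod 6) p0.2) then (1:ZMod 2) else 0) = _
      rw [hchi]
    · intro b _ hb
      have hne : ¬ (q = (b : Torus (12 * m) (6 * m)) + toTorus (12 * m) (6 * m) t) := by
        intro hcon
        exact hb (Subtype.ext (hb_eq b hcon))
      rw [if_neg hne, mul_zero]
    · intro h; exact absurd (Finset.mem_univ _) h
  · rw [if_neg hc]
    apply Finset.sum_eq_zero
    intro b _
    have hne : ¬ (q = (b : Torus (12 * m) (6 * m)) + toTorus (12 * m) (6 * m) t) := by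
      intro hcon
      apply hc
      rw [← hy2, ← hb_eq b hcon]
      exact b.2.2
    rw [if_neg hne, mul_zero]

lemma vecMul_chiGen (c : ZMod 2) (pS : ZMod 6 → Prop) [DecidablePred pS]
    (hcomb : ∀ u : ZMod 6, (offsets.map (term pS c u)).sum = 0) :
    Matrix.vecMul (chiGen m hx hy c pS) (HGen m hx hy c) = 0 := by
  funext q
  show (∑ a : Anc m hx hy c, chiGen m hx hy c pS a * HGen m hx hy c a q) = 0
  have hHeq : ∀ a : Anc m hx hy c, HGen m hx hy c a q =
      (offsets.map (fun t =>
        if (q : Torus (12 * m) (6 * m)) = (a : Torus (12 * m) (6 * m)) +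
            toTorus (12 * m) (6 * m) t then (1 : ZMod 2) else 0)).sum := by
    intro a
    rw [HGen, cast_countP]
    simp only [decide_eq_true_eq]
  calc (∑ a : Anc m hx hy c, chiGen m hx hy c pS a * HGen m hx hy c a q)
      = ∑ a : Anc m hx hy c, (offsets.map (fun t =>
          chiGen m hx hy c pS a *
          (if (q : Torus (12 * m) (6 * m)) = (a : Torus (12 * m) (6 * m)) +
            toTorus (12 * m) (6 * m) t then (1 : ZMod 2) else 0))).sum := by
        refine Finset.sum_congr rfl fun a _ => ?_
        rw [hHeq a, List.sum_map_mul_left]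
    _ = (offsets.map (fun t => ∑ a : Anc m hx hy c,
          chiGen m hx hy c pS a *
          (if (q : Torus (12 * m) (6 * m)) = (a : Torus (12 * m) (6 * m)) +
            toTorus (12 * m) (6 * m) t then (1 : ZMod 2) else 0))).sum :=
        sum_list_swap _ _
    _ = (offsets.map (term pS c
          (ZMod.castHom (dvd_mul_right 6 m) (ZMod 6) (q : Torus (12 * m) (6 * m)).2))).sum := by
        congr 1
        apply List.map_congr_left
        intro t htmem
        have ht : ((t.1 + t.2 : ℤ) : ZMod 2) = 1 := by
          fin_cases htmem <;> decide
        exact inner_sum_eq hx hy c pS _ q.2 t ht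
    _ = 0 := hcomb _

end Aux

/-! ### Cardinality computations -/

section Card

lemma card_fiber {A B : Type*} [AddCommGroup A] [AddCommGroup B]
    (f : A →+ B) (hf : Function.Surjective f) (c : B) :
    Nat.card {x // f x = c} * Nat.card B = Nat.card A := by
  obtain ⟨x0, hx0⟩ := hf c
  have e1 : {x // f x = c} ≃ f.ker :=
    { toFun := fun x => ⟨x.1 - x0, by
        rw [AddMonoidHom.mem_ker, map_sub, x.2, hx0, sub_self]⟩
      invFun := fun x => ⟨x.1 + x0, by
        rw [map_add, AddMonoidHom.mem_ker.mp x.2, hx0, zero_add]⟩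
      left_inv := fun x => by ext; simp
      right_inv := fun x => by ext; simp }
  have e3 := (QuotientAddGroup.quotientKerEquivOfSurjective f hf).toEquiv
  calc Nat.card {x // f x = c} * Nat.card B
      = Nat.card f.ker * Nat.card (A ⧸ f.ker) := by
        rw [Nat.card_congr e1, Nat.card_congr e3.symm]
    _ = Nat.card A := by
        rw [mul_comm]
        exact (AddSubgroup.card_eq_card_quotient_mul_card_addSubgroup f.ker).symm

lemma castHom_surj {n d : ℕ} [NeZero n] [NeZero d] (h : d ∣ n) :
    Function.Surjective (ZMod.castHom h (ZMod d)) := by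
  intro c
  exact ⟨(c.val : ZMod n), by rw [map_natCast]; exact ZMod.natCast_rightInverse c⟩

variable {m : ℕ} [NeZero m] [NeZero (12 * m)] [NeZero (6 * m)]
  (hx : 2 ∣ 12 * m) (hy : 2 ∣ 6 * m)

/-- parity as an additive hom. -/
def parityHom : Torus (12 * m) (6 * m) →+ ZMod 2 where
  toFun := torusParity hx hy
  map_zero' := by simp [torusParity]
  map_add' := fun p q => by
    simp only [torusParity, Prod.fst_add, Prod.snd_add, map_add]
    ring

lemma paritySurj : Function.Surjective (parityHom hx hy) := by
  intro c
  refine ⟨((c.val : ZMod (12 * m)), 0), ?_⟩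
  show torusParity hx hy _ = c
  simp only [torusParity, map_natCast, map_zero, add_zero]
  exact ZMod.natCast_rightInverse c

lemma card_dataSite :
    Nat.card (DataSite (12 * m) (6 * m) hx hy) * 2 = 72 * (m * m) := by
  have h := card_fiber (parityHom hx hy) (paritySurj hx hy) 0
  have he : Nat.card {p // parityHom hx hy p = 0}
      = Nat.card (DataSite (12 * m) (6 * m) hx hy) :=
    Nat.card_congr (Equiv.subtypeEquivRight fun p => Iff.rfl)
  rw [he] at h
  have h2 : Nat.card (ZMod 2) = 2 := Nat.card_zmod 2
  rw [h2] at h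
  rw [h, Nat.card_prod, Nat.card_zmod, Nat.card_zmod]
  ring

lemma card_anc (c : ZMod 2) :
    Nat.card (Anc m hx hy c) = 18 * (m * m) := by
  have e : Anc m hx hy c ≃
      {x : ZMod (12 * m) // ZMod.castHom hx (ZMod 2) x = 1 - c} ×
      {y : ZMod (6 * m) // ZMod.castHom hy (ZMod 2) y = c} :=
    { toFun := fun p => (⟨p.1.1, by
        have h1 := p.2.1
        rw [torusParity, p.2.2] at h1
        exact eq_sub_of_add_eq h1⟩, ⟨p.1.2, p.2.2⟩)
      invFun := fun xy => ⟨(xy.1.1, xy.2.1), by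
        constructor
        · rw [torusParity]
          show ZMod.castHom hx (ZMod 2) xy.1.1 + ZMod.castHom hy (ZMod 2) xy.2.1 = 1
          rw [xy.1.2, xy.2.2]; ring
        · exact xy.2.2⟩
      left_inv := fun p => rfl
      right_inv := fun xy => rfl }
  have hX := card_fiber (ZMod.castHom hx (ZMod 2)).toAddMonoidHom (castHom_surj hx) (1 - c)
  have hY := card_fiber (ZMod.castHom hy (ZMod 2)).toAddMonoidHom (castHom_surj hy) c
  rw [Nat.card_zmod, Nat.card_zmod] at hX hY
  have heX : Nat.card {x // (ZMod.castHom hx (ZMod 2)).toAddMonoidHom x = 1 - c}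
      = Nat.card {x : ZMod (12 * m) // ZMod.castHom hx (ZMod 2) x = 1 - c} :=
    Nat.card_congr (Equiv.subtypeEquivRight fun p => Iff.rfl)
  have heY : Nat.card {y // (ZMod.castHom hy (ZMod 2)).toAddMonoidHom y = c}
      = Nat.card {y : ZMod (6 * m) // ZMod.castHom hy (ZMod 2) y = c} :=
    Nat.card_congr (Equiv.subtypeEquivRight fun p => Iff.rfl)
  rw [heX] at hX
  rw [heY] at hY
  rw [Nat.card_congr e, Nat.card_prod]
  have h1 : Nat.card {x : ZMod (12 * m) // ZMod.castHom hx (ZMod 2) x = 1 - c} = 6 * m := by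
    omega
  have h2 : Nat.card {y : ZMod (6 * m) // ZMod.castHom hy (ZMod 2) y = c} = 3 * m := by
    omega
  rw [h1, h2]; ring

end Card

/-! ### Linear algebra helpers -/

section LinAlg

lemma indep_pair {α : Type*} (v w : α → ZMod 2) (a0 a1 : α)
    (h2 : w a0 = 1) (h3 : v a1 = 1) (h4 : w a1 = 0) :
    LinearIndependent (ZMod 2) ![v, w] := by
  rw [linearIndependent_fin2]
  constructor
  · intro h
    have := congrFun h a0
    simp only [Matrix.cons_val_one, Matrix.head_cons, Matrix.cons_val_zero] at h
    rw [h] at h2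
    simp at h2
  · intro a ha
    have := congrFun ha a1
    simp only [Matrix.cons_val_one, Matrix.head_cons, Matrix.cons_val_zero,
      Pi.smul_apply, smul_eq_mul, h4, h3, mul_zero] at this
    exact zero_ne_one this

lemma two_le_finrank_ker {ι κ : Type*} [Fintype ι] [Fintype κ]
    (H : Matrix ι κ (ZMod 2)) (v w : ι → ZMod 2)
    (hv : Matrix.vecMul v H = 0) (hw : Matrix.vecMul w H = 0)
    (hli : LinearIndependent (ZMod 2) ![v, w]) :
    2 ≤ Module.finrank (ZMod 2) (LinearMap.ker H.vecMulLinear) := by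
  have hvK : v ∈ LinearMap.ker H.vecMulLinear := by
    rw [LinearMap.mem_ker, Matrix.vecMulLinear_apply]; exact hv
  have hwK : w ∈ LinearMap.ker H.vecMulLinear := by
    rw [LinearMap.mem_ker, Matrix.vecMulLinear_apply]; exact hw
  set K := LinearMap.ker H.vecMulLinear
  let fam : Fin 2 → K := ![⟨v, hvK⟩, ⟨w, hwK⟩]
  have hfam : LinearIndependent (ZMod 2) fam := by
    apply LinearIndependent.of_comp K.subtype
    have hc : (K.subtype : K → ι → ZMod 2) ∘ fam = ![v, w] := by
      funext i
      fin_cases i <;> rfl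
    rw [hc]
    exact hli
  have := hfam.fintype_card_le_finrank
  simpa using this

lemma rank_add_two_le {ι κ : Type*} [Fintype ι] [Fintype κ] [DecidableEq ι] [DecidableEq κ]
    (H : Matrix ι κ (ZMod 2))
    (h2 : 2 ≤ Module.finrank (ZMod 2) (LinearMap.ker H.vecMulLinear)) :
    H.rank + 2 ≤ Fintype.card ι := by
  have hT : H.vecMulLinear = H.transpose.mulVecLin := by
    apply LinearMap.ext
    intro x
    rw [Matrix.vecMulLinear_apply, Matrix.mulVecLin_apply, Matrix.mulVec_transpose]
  have hrank : H.rank = Module.finrank (ZMod 2) (LinearMap.range H.vecMulLinear) := by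
    rw [← Matrix.rank_transpose, Matrix.rank, hT]
  have hrn := LinearMap.finrank_range_add_finrank_ker H.vecMulLinear
  rw [Module.finrank_pi] at hrn
  omega

end LinAlg

theorem two_dependencies_per_type (m : ℕ) [NeZero m] [NeZero (12 * m)]
    [NeZero (6 * m)] (hm : 1 ≤ m) (hx : 2 ∣ 12 * m) (hy : 2 ∣ 6 * m) :
    Matrix.vecMul (chi02 m hx hy) (HX (12 * m) (6 * m) hx hy) = 0 ∧
      Matrix.vecMul (chi04 m hx hy) (HX (12 * m) (6 * m) hx hy) = 0 ∧
      LinearIndependent (ZMod 2) ![chi02 m hx hy, chi04 m hx hy] ∧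
      2 ≤ Module.finrank (ZMod 2)
          (LinearMap.ker (HX (12 * m) (6 * m) hx hy).vecMulLinear) ∧
      2 ≤ Module.finrank (ZMod 2)
          (LinearMap.ker (HZ (12 * m) (6 * m) hx hy).vecMulLinear) ∧
      (HX (12 * m) (6 * m) hx hy).rank ≤
        Fintype.card (XAncilla (12 * m) (6 * m) hx hy) - 2 ∧
      (HZ (12 * m) (6 * m) hx hy).rank ≤
        Fintype.card (ZAncilla (12 * m) (6 * m) hx hy) - 2 ∧
      4 ≤ kDim (12 * m) (6 * m) hx hy := by
  -- the four kernel vectors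
  have h02 : Matrix.vecMul (chi02 m hx hy) (HX (12 * m) (6 * m) hx hy) = 0 :=
    vecMul_chiGen hx hy 0 (fun v => v = 0 ∨ v = 2) (by decide)
  have h04 : Matrix.vecMul (chi04 m hx hy) (HX (12 * m) (6 * m) hx hy) = 0 :=
    vecMul_chiGen hx hy 0 (fun v => v = 0 ∨ v = 4) (by decide)
  have hz13 : Matrix.vecMul (chiGen m hx hy 1 (fun v => v = 1 ∨ v = 3))
      (HZ (12 * m) (6 * m) hx hy) = 0 :=
    vecMul_chiGen hx hy 1 (fun v => v = 1 ∨ v = 3) (by decide)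
  have hz15 : Matrix.vecMul (chiGen m hx hy 1 (fun v => v = 1 ∨ v = 5))
      (HZ (12 * m) (6 * m) hx hy) = 0 :=
    vecMul_chiGen hx hy 1 (fun v => v = 1 ∨ v = 5) (by decide)
  -- witnesses for X
  have ha0mem : torusParity hx hy ((1 : ZMod (12 * m)), (0 : ZMod (6 * m))) = 1 ∧
      ZMod.castHom hy (ZMod 2) (((1 : ZMod (12 * m)), (0 : ZMod (6 * m))) :
        Torus (12 * m) (6 * m)).2 = 0 := by
    constructor
    · show ZMod.castHom hx (ZMod 2) 1 + ZMod.castHom hy (ZMod 2) 0 = 1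
      rw [map_one, map_zero, add_zero]
    · show ZMod.castHom hy (ZMod 2) 0 = 0
      rw [map_zero]
  have ha1mem : torusParity hx hy ((1 : ZMod (12 * m)), ((2 : ℕ) : ZMod (6 * m))) = 1 ∧
      ZMod.castHom hy (ZMod 2) (((1 : ZMod (12 * m)), ((2 : ℕ) : ZMod (6 * m))) :
        Torus (12 * m) (6 * m)).2 = 0 := by
    constructor
    · show ZMod.castHom hx (ZMod 2) 1 + ZMod.castHom hy (ZMod 2) ((2:ℕ) : ZMod (6*m)) = 1
      rw [map_one, map_natCast]
      decide
    · show ZMod.castHom hy (ZMod 2) ((2:ℕ) : ZMod (6*m)) = 0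
      rw [map_natCast]
      decide
  have hliX : LinearIndependent (ZMod 2) ![chi02 m hx hy, chi04 m hx hy] := by
    apply indep_pair _ _ (⟨_, ha0mem⟩ : XAncilla (12 * m) (6 * m) hx hy)
      (⟨_, ha1mem⟩ : XAncilla (12 * m) (6 * m) hx hy)
    · show (if _ ∨ _ then (1:ZMod 2) else 0) = 1
      rw [if_pos]
      left
      simp
    · show (if _ ∨ _ then (1:ZMod 2) else 0) = 1
      rw [if_pos]
      rw [map_natCast]
      right
      decide
    · show (if _ ∨ _ then (1:ZMod 2) else 0) = 0
      rw [if_neg]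
      rw [map_natCast]
      decide
  -- witnesses for Z
  have hb0mem : torusParity hx hy ((0 : ZMod (12 * m)), ((1 : ℕ) : ZMod (6 * m))) = 1 ∧
      ZMod.castHom hy (ZMod 2) (((0 : ZMod (12 * m)), ((1 : ℕ) : ZMod (6 * m))) :
        Torus (12 * m) (6 * m)).2 = 1 := by
    constructor
    · show ZMod.castHom hx (ZMod 2) 0 + ZMod.castHom hy (ZMod 2) ((1:ℕ) : ZMod (6*m)) = 1
      rw [map_zero, map_natCast, zero_add]
      decide
    · show ZMod.castHom hy (ZMod 2) ((1:ℕ) : ZMod (6*m)) = 1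
      rw [map_natCast]
      decide
  have hb1mem : torusParity hx hy ((0 : ZMod (12 * m)), ((3 : ℕ) : ZMod (6 * m))) = 1 ∧
      ZMod.castHom hy (ZMod 2) (((0 : ZMod (12 * m)), ((3 : ℕ) : ZMod (6 * m))) :
        Torus (12 * m) (6 * m)).2 = 1 := by
    constructor
    · show ZMod.castHom hx (ZMod 2) 0 + ZMod.castHom hy (ZMod 2) ((3:ℕ) : ZMod (6*m)) = 1
      rw [map_zero, map_natCast, zero_add]
      decide
    · show ZMod.castHom hy (ZMod 2) ((3:ℕ) : ZMod (6*m)) = 1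
      rw [map_natCast]
      decide
  have hliZ : LinearIndependent (ZMod 2)
      ![chiGen m hx hy 1 (fun v => v = 1 ∨ v = 3),
        chiGen m hx hy 1 (fun v => v = 1 ∨ v = 5)] := by
    apply indep_pair _ _ (⟨_, hb0mem⟩ : Anc m hx hy 1) (⟨_, hb1mem⟩ : Anc m hx hy 1)
    · show (if _ ∨ _ then (1:ZMod 2) else 0) = 1
      rw [if_pos]
      rw [map_natCast]
      left
      decide
    · show (if _ ∨ _ then (1:ZMod 2) else 0) = 1
      rw [if_pos]
      rw [map_natCast]
      right
      decide
    · show (if _ ∨ _ then (1:ZMod 2) else 0) = 0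
      rw [if_neg]
      rw [map_natCast]
      decide
  -- kernel dimensions
  have hkerX := two_le_finrank_ker (HX (12 * m) (6 * m) hx hy) _ _ h02 h04 hliX
  have hkerZ := two_le_finrank_ker (HZ (12 * m) (6 * m) hx hy) _ _ hz13 hz15 hliZ
  -- rank bounds
  have hrX := rank_add_two_le (HX (12 * m) (6 * m) hx hy) hkerX
  have hrZ := rank_add_two_le (HZ (12 * m) (6 * m) hx hy) hkerZ
  -- cardinalities
  have hcX : Fintype.card (XAncilla (12 * m) (6 * m) hx hy) = 18 * (m * m) := by
    rw [← Nat.card_eq_fintype_card]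
    exact card_anc hx hy 0
  have hcZ : Fintype.card (ZAncilla (12 * m) (6 * m) hx hy) = 18 * (m * m) := by
    rw [← Nat.card_eq_fintype_card]
    exact card_anc hx hy 1
  have hcD : Fintype.card (DataSite (12 * m) (6 * m) hx hy) * 2 = 72 * (m * m) := by
    rw [← Nat.card_eq_fintype_card]
    exact card_dataSite hx hy
  have hm2 : 1 ≤ m * m := Nat.one_le_iff_ne_zero.mpr (by positivity)
  refine ⟨h02, h04, hliX, hkerX, hkerZ, ?_, ?_, ?_⟩
  · omega
  · omega
  · rw [kDim]
    omega
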